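/- Let C be a finite set of unit vectors in ℝ^n such that the inner product of any two distinct vectors of C lies in {a,b} with a,b < 1. Suppose p ≥ 1 and nonnegative reals α_1, α_2 satisfy: for the optimal solution of the linear program maximizing 1+α_1+α_2 subject to 1 + α_1·G_i^{(n)}(a) + α_2·G_i^{(n)}(b) ≥ 0 for i = 0,...,p and α_1, α_2 ≥ 0, the value M of the program is finite. Then |C| ≤ M. (Delsarte–Goethals–Seidel LP bound for two-distance sets.) -/

import Mathlib

/-!
For polynomials in `n` variables, the Fischer inner product `⟨p, q⟩ = ∑ α! p_α q_α` makes
multiplication by `X i` adjoint to `∂/∂X i`. Hence `⟨⟨y, X⟩^k, p⟩ = k! p(y)` for `p` homogeneous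
of degree `k`, and multiples of `|X|²` are orthogonal to harmonic polynomials. The zonal polynomial
`Z_x^k`, the homogenization of `G_k(⟨x, ·⟩)`, is harmonic when `|x| = 1`, and
`⟨y, X⟩^k ≡ c Z_y^k` modulo `|X|²` with `c > 0` independent of `y`; so
`k! G_k(⟨x, y⟩) = c ⟨Z_y^k, Z_x^k⟩` on the sphere and `∑_{x,y ∈ C} G_k(⟨x, y⟩) ≥ 0`.

For a two-distance set this sum is `|C| + N_a G_k(a) + N_b G_k(b)` with `N_a + N_b = |C|² - |C|`,
so `(N_a / |C|, N_b / |C|)` is feasible for the linear program, with value `|C|`.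
-/

open RealInnerProductSpace

/-- Gegenbauer polynomials, normalized so that `G_k^{(n)}(1) = 1`. -/
noncomputable def gegenbauer (n : ℕ) : ℕ → ℝ → ℝ
  | 0 => fun _ => 1
  | 1 => fun t => t
  | (k + 2) => fun t =>
      ((2 * ((k : ℝ) + 2) + (n : ℝ) - 4) * t * gegenbauer n (k + 1) t
        - (((k : ℝ) + 2) - 1) * gegenbauer n k t) / (((k : ℝ) + 2) + (n : ℝ) - 3)

open Finset
open scoped Nat

lemma gegenbauer_add_two (n k : ℕ) (t : ℝ) :
    gegenbauer n (k + 2) t = ((k : ℝ) + n - 1)⁻¹ *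
      ((2 * (k : ℝ) + n) * t * gegenbauer n (k + 1) t - ((k : ℝ) + 1) * gegenbauer n k t) := by
  simp only [gegenbauer]
  rw [div_eq_inv_mul]
  congr 1 <;> ring

lemma gegenbauer_one {n : ℕ} (hn : 2 ≤ n) : ∀ k, gegenbauer n k 1 = 1
  | 0 => rfl
  | 1 => rfl
  | k + 2 => by
    have : (k : ℝ) + n - 1 ≠ 0 := by
      have : (2 : ℝ) ≤ n := by exact_mod_cast hn
      linarith [k.cast_nonneg (α := ℝ)]
    rw [gegenbauer_add_two, gegenbauer_one hn (k + 1), gegenbauer_one hn k]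
    field_simp
    ring

namespace MvPolynomial

variable {σ : Type*}

lemma sum_coeff_mul_of_support_subset {R : Type*} [CommSemiring R] {p : MvPolynomial σ R}
    {s : Finset (σ →₀ ℕ)} (h : p.support ⊆ s) (g : (σ →₀ ℕ) → R) :
    ∑ α ∈ s, p.coeff α * g α = ∑ α ∈ p.support, p.coeff α * g α :=
  (sum_subset h fun α _ hα => by rw [notMem_support_iff.mp hα, zero_mul]).symm

variable [Fintype σ]

noncomputable def fischerWeight (α : σ →₀ ℕ) : ℝ := ∏ i, ((α i)! : ℝ)

lemma fischerWeight_pos (α : σ →₀ ℕ) : 0 < fischerWeight α :=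
  prod_pos fun i _ => mod_cast (α i).factorial_pos

lemma fischerWeight_add_single (α : σ →₀ ℕ) (i : σ) :
    fischerWeight (α + Finsupp.single i 1) = (α i + 1) * fischerWeight α := by
  classical
  have h : ∀ j, ((((α + Finsupp.single i 1 : σ →₀ ℕ)) j)! : ℝ)
      = (α j)! * if j = i then (α i : ℝ) + 1 else 1 := by
    intro j
    rcases eq_or_ne j i with rfl | hj
    · simp [Nat.factorial_succ, mul_comm]
    · simp [hj]
  simp only [fischerWeight, h, prod_mul_distrib, prod_ite_eq', mem_univ, if_true]
  ring

noncomputable def fischer : MvPolynomial σ ℝ →ₗ[ℝ] MvPolynomial σ ℝ →ₗ[ℝ] ℝ :=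
  LinearMap.mk₂ ℝ (fun p q => ∑ α ∈ p.support, p.coeff α * (q.coeff α * fischerWeight α))
    (fun p p' q => by
      classical
      rw [← sum_coeff_mul_of_support_subset (support_add (p := p) (q := p')),
        ← sum_coeff_mul_of_support_subset (subset_union_left (s₂ := p'.support)),
        ← sum_coeff_mul_of_support_subset (subset_union_right (s₁ := p.support)),
        ← sum_add_distrib]
      simp only [coeff_add, add_mul])
    (fun c p q => by
      rw [← sum_coeff_mul_of_support_subset (support_smul (a := c) (f := p)), smul_eq_mul, mul_sum]
      simp only [coeff_smul, smul_eq_mul, mul_assoc])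
    (fun p q q' => by simp only [coeff_add, add_mul, mul_add, sum_add_distrib])
    (fun c p q => by simp only [coeff_smul, smul_eq_mul, mul_sum, mul_left_comm, mul_assoc])

lemma fischer_apply (p q : MvPolynomial σ ℝ) :
    fischer p q = ∑ α ∈ p.support, p.coeff α * (q.coeff α * fischerWeight α) := rfl

lemma fischer_self_nonneg (p : MvPolynomial σ ℝ) : 0 ≤ fischer p p :=
  sum_nonneg fun α _ => by
    rw [← mul_assoc]; exact mul_nonneg (mul_self_nonneg _) (fischerWeight_pos α).le

lemma fischer_monomial (d : σ →₀ ℕ) (c : ℝ) (q : MvPolynomial σ ℝ) :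
    fischer (monomial d c) q = c * (q.coeff d * fischerWeight d) := by
  classical
  rw [fischer_apply, ← sum_coeff_mul_of_support_subset support_monomial_subset, sum_singleton,
    coeff_monomial, if_pos rfl]

lemma fischer_X_mul (i : σ) (p q : MvPolynomial σ ℝ) :
    fischer (X i * p) q = fischer p (pderiv i q) := by
  induction p using MvPolynomial.induction_on' with
  | add p p' hp hp' => simp only [mul_add, map_add, LinearMap.add_apply, hp, hp']
  | monomial d c =>
    rw [X, monomial_mul, one_mul, add_comm, fischer_monomial, fischer_monomial, coeff_pderiv,
      fischerWeight_add_single]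
    ring

noncomputable def linearForm (x : σ → ℝ) : MvPolynomial σ ℝ := ∑ i, C (x i) * X i

noncomputable def sumSq : MvPolynomial σ ℝ := ∑ i, X i * X i

noncomputable def dirDeriv (x : σ → ℝ) : Derivation ℝ (MvPolynomial σ ℝ) (MvPolynomial σ ℝ) :=
  ∑ i, x i • pderiv i

noncomputable def laplacian : MvPolynomial σ ℝ →ₗ[ℝ] MvPolynomial σ ℝ :=
  ∑ i, (pderiv i).toLinearMap ∘ₗ (pderiv i).toLinearMap

lemma dirDeriv_apply (x : σ → ℝ) (p : MvPolynomial σ ℝ) :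
    dirDeriv x p = ∑ i, x i • pderiv i p := by
  rw [dirDeriv, ← Derivation.coeFnAddMonoidHom_apply, map_sum, Finset.sum_apply]
  rfl

lemma dirDeriv_mul (x : σ → ℝ) (p q : MvPolynomial σ ℝ) :
    dirDeriv x (p * q) = dirDeriv x p * q + p * dirDeriv x q := by
  rw [Derivation.leibniz, smul_eq_mul, smul_eq_mul, add_comm, mul_comm q]

lemma laplacian_apply (p : MvPolynomial σ ℝ) : laplacian p = ∑ i, pderiv i (pderiv i p) := by
  simp [laplacian]

lemma fischer_linearForm_mul (x : σ → ℝ) (p q : MvPolynomial σ ℝ) :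
    fischer (linearForm x * p) q = fischer p (dirDeriv x q) := by
  simp only [linearForm, ← smul_eq_C_mul, sum_mul, smul_mul_assoc, map_sum, map_smul,
    LinearMap.sum_apply, LinearMap.smul_apply, fischer_X_mul, dirDeriv_apply]

lemma fischer_sumSq_mul (p q : MvPolynomial σ ℝ) :
    fischer (sumSq * p) q = fischer p (laplacian q) := by
  simp only [sumSq, sum_mul, mul_assoc, map_sum, LinearMap.sum_apply,
    fischer_X_mul, laplacian_apply]

lemma pderiv_linearForm (i : σ) (x : σ → ℝ) : pderiv i (linearForm x) = C (x i) := by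
  classical
  simp [linearForm, pderiv_X, Pi.single_apply]

lemma pderiv_sumSq (i : σ) : pderiv i (sumSq : MvPolynomial σ ℝ) = (2 : ℝ) • X i := by
  classical
  simp [sumSq, pderiv_X, Pi.single_apply, two_smul, sum_add_distrib]

lemma dirDeriv_linearForm (x y : σ → ℝ) : dirDeriv x (linearForm y) = C (x ⬝ᵥ y) := by
  simp only [dirDeriv_apply, pderiv_linearForm, dotProduct, smul_eq_C_mul, ← C_mul, map_sum]

lemma dirDeriv_sumSq (x : σ → ℝ) : dirDeriv x sumSq = (2 : ℝ) • linearForm x := by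
  simp [dirDeriv_apply, pderiv_sumSq, linearForm, smul_eq_C_mul, mul_sum, mul_left_comm]

lemma laplacian_linearForm (x : σ → ℝ) : laplacian (linearForm x) = 0 := by
  simp [laplacian_apply, pderiv_linearForm]

lemma laplacian_linearForm_mul (x : σ → ℝ) (p : MvPolynomial σ ℝ) :
    laplacian (linearForm x * p) = (2 : ℝ) • dirDeriv x p + linearForm x * laplacian p := by
  simp only [laplacian_apply, dirDeriv_apply, pderiv_mul, map_add, pderiv_linearForm, pderiv_C,
    mul_sum, smul_sum, ← sum_add_distrib]
  refine sum_congr rfl fun i _ => ?_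
  simp only [two_smul, smul_eq_C_mul, zero_mul, zero_add]
  ring

lemma laplacian_sumSq_mul {p : MvPolynomial σ ℝ} {k : ℕ} (hp : p.IsHomogeneous k) :
    laplacian (sumSq * p) = (2 * Fintype.card σ + 4 * k : ℝ) • p + sumSq * laplacian p := by
  have euler := hp.sum_X_mul_pderiv
  have h : ∀ i, pderiv i (pderiv i (sumSq * p))
      = (2 : ℝ) • p + (4 : ℝ) • (X i * pderiv i p) + sumSq * pderiv i (pderiv i p) := by
    intro i
    simp only [pderiv_mul, map_add, pderiv_sumSq, Derivation.map_smul, pderiv_X_self]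
    simp only [smul_eq_C_mul, map_ofNat]
    ring
  simp only [laplacian_apply, h, sum_add_distrib, ← smul_sum, euler, ← mul_sum, sum_const,
    card_univ]
  rw [← Nat.cast_smul_eq_nsmul ℝ, ← Nat.cast_smul_eq_nsmul ℝ]
  module

lemma isHomogeneous_linearForm (x : σ → ℝ) : (linearForm x).IsHomogeneous 1 :=
  IsHomogeneous.sum _ _ _ fun i _ => (isHomogeneous_X ℝ i).C_mul (x i)

lemma isHomogeneous_sumSq : (sumSq : MvPolynomial σ ℝ).IsHomogeneous 2 :=
  IsHomogeneous.sum _ _ _ fun i _ => (isHomogeneous_X ℝ i).mul (isHomogeneous_X ℝ i)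

lemma isHomogeneous_dirDeriv (x : σ → ℝ) {p : MvPolynomial σ ℝ} {k : ℕ}
    (hp : p.IsHomogeneous (k + 1)) : (dirDeriv x p).IsHomogeneous k := by
  rw [← mem_homogeneousSubmodule, dirDeriv_apply]
  exact Submodule.sum_mem _ fun i _ => Submodule.smul_mem _ _ (hp.pderiv (i := i))

lemma eval_dirDeriv_self (y : σ → ℝ) {p : MvPolynomial σ ℝ} {k : ℕ} (hp : p.IsHomogeneous k) :
    eval y (dirDeriv y p) = k * eval y p := by
  have := congrArg (eval y) hp.sum_X_mul_pderiv
  simpa [dirDeriv_apply, map_sum, nsmul_eq_mul] using this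

lemma fischer_linearForm_pow (y : σ → ℝ) {k : ℕ} {p : MvPolynomial σ ℝ}
    (hp : p.IsHomogeneous k) : fischer (linearForm y ^ k) p = k ! * eval y p := by
  induction k generalizing p with
  | zero =>
    rw [← totalDegree_zero_iff_isHomogeneous, totalDegree_eq_zero_iff_eq_C] at hp
    rw [hp, pow_zero, ← C_1, C_apply, fischer_monomial]
    simp [fischerWeight]
  | succ k ih =>
    rw [pow_succ', fischer_linearForm_mul, ih (isHomogeneous_dirDeriv y hp),
      eval_dirDeriv_self y hp, Nat.factorial_succ]
    push_cast
    ring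

lemma eval_linearForm (x y : σ → ℝ) : eval y (linearForm x) = x ⬝ᵥ y := by
  simp [linearForm, dotProduct]

lemma eval_sumSq (y : σ → ℝ) : eval y sumSq = y ⬝ᵥ y := by
  simp [sumSq, dotProduct]

/-- The homogenization of `z ↦ G_k(⟨x, z⟩)` from the unit sphere: the recurrence of `gegenbauer`
with `t` replaced by `linearForm x` and `1` by `sumSq`. -/
noncomputable def zonal (x : σ → ℝ) : ℕ → MvPolynomial σ ℝ
  | 0 => 1
  | 1 => linearForm x
  | k + 2 => ((k : ℝ) + Fintype.card σ - 1)⁻¹ •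
      ((2 * (k : ℝ) + Fintype.card σ) • (linearForm x * zonal x (k + 1))
        - ((k : ℝ) + 1) • (sumSq * zonal x k))

lemma zonal_add_two (x : σ → ℝ) (k : ℕ) :
    zonal x (k + 2) = ((k : ℝ) + Fintype.card σ - 1)⁻¹ •
      ((2 * (k : ℝ) + Fintype.card σ) • (linearForm x * zonal x (k + 1))
        - ((k : ℝ) + 1) • (sumSq * zonal x k)) := rfl

lemma isHomogeneous_zonal (x : σ → ℝ) : ∀ k, (zonal x k).IsHomogeneous k
  | 0 => isHomogeneous_one _ _
  | 1 => isHomogeneous_linearForm x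
  | k + 2 => by
    have hL := (isHomogeneous_linearForm x).mul (isHomogeneous_zonal x (k + 1))
    have hS := isHomogeneous_sumSq.mul (isHomogeneous_zonal x k)
    rw [show 1 + (k + 1) = k + 2 by ring] at hL
    rw [show 2 + k = k + 2 by ring] at hS
    rw [← mem_homogeneousSubmodule] at hL hS ⊢
    rw [zonal_add_two]
    exact Submodule.smul_mem _ _ (Submodule.sub_mem _ (Submodule.smul_mem _ _ hL)
      (Submodule.smul_mem _ _ hS))

lemma eval_zonal (x : σ → ℝ) {y : σ → ℝ} (hy : y ⬝ᵥ y = 1) :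
    ∀ k, eval y (zonal x k) = gegenbauer (Fintype.card σ) k (x ⬝ᵥ y)
  | 0 => by simp [zonal, gegenbauer]
  | 1 => by simp [zonal, gegenbauer, eval_linearForm]
  | k + 2 => by
    rw [zonal_add_two, gegenbauer_add_two, ← eval_zonal x hy k, ← eval_zonal x hy (k + 1)]
    simp only [smul_eval, map_sub, eval_mul, eval_linearForm, eval_sumSq, hy]
    ring

lemma dirDeriv_zonal {x : σ → ℝ} (hn : 2 ≤ Fintype.card σ) (hx : x ⬝ᵥ x = 1) :
    ∀ k, dirDeriv x (zonal x (k + 1)) = ((k : ℝ) + 1) • zonal x k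
  | 0 => by simp [zonal, dirDeriv_linearForm, hx]
  | 1 => by
    have hn' : (Fintype.card σ : ℝ) - 1 ≠ 0 := by
      have : (2 : ℝ) ≤ Fintype.card σ := by exact_mod_cast hn
      linarith
    rw [zonal_add_two]
    simp only [Derivation.map_smul, Derivation.map_sub, dirDeriv_mul, dirDeriv_linearForm,
      dirDeriv_sumSq, hx, zonal, map_one, one_mul, mul_one]
    match_scalars
    simp only [zero_add]
    rw [inv_mul_eq_iff_eq_mul₀ hn']
    ring
  | k + 2 => by
    have : (2 : ℝ) ≤ Fintype.card σ := by exact_mod_cast hn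
    have h₀ : (k : ℝ) + Fintype.card σ - 1 ≠ 0 := by linarith [k.cast_nonneg (α := ℝ)]
    have h₁ : (k : ℝ) + 1 + Fintype.card σ - 1 ≠ 0 := by linarith [k.cast_nonneg (α := ℝ)]
    rw [zonal_add_two x (k + 1)]
    simp only [Derivation.map_smul, Derivation.map_sub, dirDeriv_mul, dirDeriv_linearForm,
      dirDeriv_sumSq, hx, map_one, one_mul]
    rw [dirDeriv_zonal hn hx (k + 1), dirDeriv_zonal hn hx k, zonal_add_two x k]
    push_cast
    simp only [smul_sub, smul_smul, mul_smul_comm, smul_mul_assoc]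
    match_scalars <;> field_simp <;> ring

lemma laplacian_zonal {x : σ → ℝ} (hn : 2 ≤ Fintype.card σ) (hx : x ⬝ᵥ x = 1) :
    ∀ k, laplacian (zonal x k) = 0
  | 0 => by simp [zonal, laplacian_apply]
  | 1 => laplacian_linearForm x
  | k + 2 => by
    rw [zonal_add_two, map_smul, map_sub, map_smul, map_smul, laplacian_linearForm_mul,
      laplacian_sumSq_mul (isHomogeneous_zonal x k), laplacian_zonal hn hx k,
      laplacian_zonal hn hx (k + 1), dirDeriv_zonal hn hx k]
    simp only [mul_zero, add_zero]
    match_scalars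
    ring

lemma linearForm_mul_zonal {x : σ → ℝ} (hn : 2 ≤ Fintype.card σ) (k : ℕ) :
    linearForm x * zonal x (k + 1) =
      (((k : ℝ) + Fintype.card σ - 1) / (2 * k + Fintype.card σ)) • zonal x (k + 2)
        + (((k : ℝ) + 1) / (2 * k + Fintype.card σ)) • (sumSq * zonal x k) := by
  have : (2 : ℝ) ≤ Fintype.card σ := by exact_mod_cast hn
  have h₀ : (k : ℝ) + Fintype.card σ - 1 ≠ 0 := by linarith [k.cast_nonneg (α := ℝ)]
  have h₁ : 2 * (k : ℝ) + Fintype.card σ ≠ 0 := by linarith [k.cast_nonneg (α := ℝ)]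
  rw [zonal_add_two]
  match_scalars
  · field_simp
  · field_simp; ring

lemma exists_linearForm_pow_eq (hn : 2 ≤ Fintype.card σ) :
    ∀ k, ∃ c : ℝ, 0 < c ∧ ∀ y : σ → ℝ, ∃ r, linearForm y ^ k = c • zonal y k + sumSq * r
  | 0 => ⟨1, one_pos, fun y => ⟨0, by simp [zonal]⟩⟩
  | 1 => ⟨1, one_pos, fun y => ⟨0, by simp [zonal]⟩⟩
  | k + 2 => by
    have : (2 : ℝ) ≤ Fintype.card σ := by exact_mod_cast hn
    obtain ⟨c, hc, h⟩ := exists_linearForm_pow_eq hn (k + 1)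
    refine ⟨c * (((k : ℝ) + Fintype.card σ - 1) / (2 * k + Fintype.card σ)),
      mul_pos hc (div_pos (by linarith [k.cast_nonneg (α := ℝ)])
        (by linarith [k.cast_nonneg (α := ℝ)])), fun y => ?_⟩
    obtain ⟨r, hr⟩ := h y
    refine ⟨(c * (((k : ℝ) + 1) / (2 * k + Fintype.card σ))) • zonal y k + linearForm y * r, ?_⟩
    rw [pow_succ', hr, mul_add, mul_smul_comm, linearForm_mul_zonal hn, mul_add, mul_smul_comm,
      mul_left_comm (linearForm y)]
    module

lemma factorial_mul_gegenbauer_eq (hn : 2 ≤ Fintype.card σ) (k : ℕ) :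
    ∃ c : ℝ, 0 < c ∧ ∀ x y : σ → ℝ, x ⬝ᵥ x = 1 → y ⬝ᵥ y = 1 →
      k ! * gegenbauer (Fintype.card σ) k (x ⬝ᵥ y) = c * fischer (zonal y k) (zonal x k) := by
  obtain ⟨c, hc, h⟩ := exists_linearForm_pow_eq hn k
  refine ⟨c, hc, fun x y hx hy => ?_⟩
  obtain ⟨r, hr⟩ := h y
  rw [← eval_zonal x hy, ← fischer_linearForm_pow y (isHomogeneous_zonal x k), hr, map_add,
    LinearMap.add_apply, fischer_sumSq_mul, laplacian_zonal hn hx, map_zero, add_zero, map_smul,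
    LinearMap.smul_apply, smul_eq_mul]

end MvPolynomial

theorem gegenbauer_sum_nonneg {σ : Type*} [Fintype σ] (hn : 2 ≤ Fintype.card σ)
    (C : Finset (EuclideanSpace ℝ σ)) (hC : ∀ x ∈ C, ‖x‖ = 1) (k : ℕ) :
    0 ≤ ∑ x ∈ C, ∑ y ∈ C, gegenbauer (Fintype.card σ) k ⟪x, y⟫ := by
  obtain ⟨c, hc, h⟩ := MvPolynomial.factorial_mul_gegenbauer_eq hn k
  have inner_eq (x y : EuclideanSpace ℝ σ) : ⟪x, y⟫ = x.ofLp ⬝ᵥ y.ofLp := by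
    rw [EuclideanSpace.inner_eq_star_dotProduct, star_trivial, dotProduct_comm]
  have unit (x) (hx : x ∈ C) : x.ofLp ⬝ᵥ x.ofLp = 1 := by
    rw [← inner_eq, real_inner_self_eq_norm_sq, hC x hx, one_pow]
  set Z := ∑ x ∈ C, MvPolynomial.zonal x.ofLp k
  have key : k ! * ∑ x ∈ C, ∑ y ∈ C, gegenbauer (Fintype.card σ) k ⟪x, y⟫
      = c * MvPolynomial.fischer Z Z := by
    simp only [Z, map_sum, LinearMap.sum_apply, mul_sum]
    exact sum_congr rfl fun x hx => sum_congr rfl fun y hy => by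
      rw [inner_eq, h _ _ (unit x hx) (unit y hy)]
  have : 0 ≤ k ! * ∑ x ∈ C, ∑ y ∈ C, gegenbauer (Fintype.card σ) k ⟪x, y⟫ :=
    key ▸ mul_nonneg hc.le (MvPolynomial.fischer_self_nonneg Z)
  exact (mul_nonneg_iff_of_pos_left (mod_cast k.factorial_pos)).mp this

lemma exists_sum_sum_apply_inner_eq {E : Type*} [NormedAddCommGroup E] [InnerProductSpace ℝ E]
    {C : Finset E} (hC : ∀ x ∈ C, ‖x‖ = 1) {a b : ℝ}
    (hab : ∀ x ∈ C, ∀ y ∈ C, x ≠ y → ⟪x, y⟫ = a ∨ ⟪x, y⟫ = b) :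
    ∃ Na Nb : ℕ, #C + Na + Nb = #C * #C ∧ ∀ f : ℝ → ℝ,
      ∑ x ∈ C, ∑ y ∈ C, f ⟪x, y⟫ = #C * f 1 + Na * f a + Nb * f b := by
  classical
  set Da := C.offDiag.filter fun z => ⟪z.1, z.2⟫ = a
  set Db := C.offDiag.filter fun z => ⟪z.1, z.2⟫ ≠ a
  refine ⟨#Da, #Db, ?_, fun f => ?_⟩
  · rw [add_assoc, card_filter_add_card_filter_not, offDiag_card,
      Nat.add_sub_cancel' (Nat.le_mul_self _)]
  have diag : ∀ x ∈ C, f ⟪x, x⟫ = f 1 := fun x hx => by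
    rw [real_inner_self_eq_norm_sq, hC x hx, one_pow]
  have on_Da : ∀ z ∈ Da, f ⟪z.1, z.2⟫ = f a := fun z hz => by rw [(mem_filter.mp hz).2]
  have on_Db : ∀ z ∈ Db, f ⟪z.1, z.2⟫ = f b := fun z hz => by
    obtain ⟨hz, hza⟩ := mem_filter.mp hz
    obtain ⟨hx, hy, hxy⟩ := mem_offDiag.mp hz
    rw [(hab _ hx _ hy hxy).resolve_left hza]
  rw [← sum_product' (f := fun x y => f ⟪x, y⟫), ← diag_union_offDiag,
    sum_union (disjoint_diag_offDiag C), sum_diag, ← sum_filter_add_sum_filter_not C.offDiag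
      (fun z => ⟪z.1, z.2⟫ = a), sum_congr rfl diag, sum_congr rfl on_Da, sum_congr rfl on_Db]
  simp only [sum_const, nsmul_eq_mul]
  ring

theorem stmt4_general (n : ℕ) (hn : 2 ≤ n) (C : Finset (EuclideanSpace ℝ (Fin n)))
    (hC : ∀ x ∈ C, ‖x‖ = 1) (a b : ℝ)
    (hab : ∀ x ∈ C, ∀ y ∈ C, x ≠ y → ⟪x, y⟫ = a ∨ ⟪x, y⟫ = b)
    (p : ℕ) (M : ℝ)
    (hM : ∀ α₁ α₂ : ℝ, 0 ≤ α₁ → 0 ≤ α₂ →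
      (∀ i ≤ p, 0 ≤ 1 + α₁ * gegenbauer n i a + α₂ * gegenbauer n i b) →
      1 + α₁ + α₂ ≤ M) :
    (C.card : ℝ) ≤ M := by
  obtain ⟨Na, Nb, hcard, hsum⟩ := exists_sum_sum_apply_inner_eq hC hab
  rcases C.eq_empty_or_nonempty with rfl | hne
  · have := hM 0 0 le_rfl le_rfl fun i _ => by simp
    rw [card_empty, Nat.cast_zero]
    linarith
  have hm : (0 : ℝ) < #C := by exact_mod_cast hne.card_pos
  have hfeasible (i : ℕ) : 0 ≤ 1 + Na / #C * gegenbauer n i a + Nb / #C * gegenbauer n i b := by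
    have h := gegenbauer_sum_nonneg (by simpa using hn) C hC i
    rw [Fintype.card_fin, hsum, gegenbauer_one hn] at h
    calc 0 ≤ (#C * 1 + Na * gegenbauer n i a + Nb * gegenbauer n i b) / #C := div_nonneg h hm.le
      _ = _ := by field_simp
  have hcard' : (#C : ℝ) + Na + Nb = #C * #C := by exact_mod_cast hcard
  calc (#C : ℝ) = 1 + Na / #C + Nb / #C := by field_simp; linarith
    _ ≤ M := hM _ _ (by positivity) (by positivity) fun i _ => hfeasible i

/-- Delsarte–Goethals–Seidel LP bound for spherical two-distance sets: if `M` is the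
(finite) optimal value of the LP `max 1 + α₁ + α₂` subject to
`1 + α₁ G_i(a) + α₂ G_i(b) ≥ 0` for `i = 0, …, p` and `α₁, α₂ ≥ 0`,
then `|C| ≤ M`. -/
theorem stmt4 (n : ℕ) (hn : 2 ≤ n) (C : Finset (EuclideanSpace ℝ (Fin n)))
    (hC : ∀ x ∈ C, ‖x‖ = 1) (a b : ℝ) (ha : a < 1) (hb : b < 1)
    (hab : ∀ x ∈ C, ∀ y ∈ C, x ≠ y → ⟪x, y⟫ = a ∨ ⟪x, y⟫ = b)
    (p : ℕ) (hp : 1 ≤ p) (M : ℝ)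
    (hM : ∀ α₁ α₂ : ℝ, 0 ≤ α₁ → 0 ≤ α₂ →
      (∀ i ≤ p, 0 ≤ 1 + α₁ * gegenbauer n i a + α₂ * gegenbauer n i b) →
      1 + α₁ + α₂ ≤ M) :
    (C.card : ℝ) ≤ M :=
  stmt4_general n hn C hC a b hab p M hM
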